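/- The sparse projection coefficient in the lower-bound construction. Let N ~ N(0, I_p), A ⊆ {2,…,p} with |A| = s ≥ 2, ρ ∈ (0, 1/√2), and define X by X_ℓ = ρ(N₁² − 1) + √(1−2ρ²) N_ℓ for ℓ ∈ A, X_ℓ = N_ℓ otherwise; let f(X) = (Φ/√3) X₁² for Φ > 0, and let M = E[XX^T]. Then the projection coefficient θ = M^{−1} E[X f(X)] equals (2Φρ / (√3 (1 + 2(s−1)ρ²))) · 1_A, where 1_A ∈ ℝ^p is the indicator vector of A; in particular θ is s-sparse. Moreover the misspecification satisfies E[(f(X) − X^Tθ)²] = (Φ²/3)(3 − 4sρ²/(1 + 2(s−1)ρ²)) ≤ Φ². -/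

import Mathlib

open MeasureTheory ProbabilityTheory Matrix

noncomputable section

namespace SSL

/-- Euclidean inner product. -/
def dot {p : ℕ} (v w : Fin p → ℝ) : ℝ := ∑ i, v i * w i

/-- The number of nonzero entries of a vector. -/
def l0 {p : ℕ} (v : Fin p → ℝ) : ℕ := (Finset.univ.filter fun i => v i ≠ 0).card

/-- The standard Gaussian measure `N(0, I_p)` on `ℝ^p`. -/
def stdGaussianPi (p : ℕ) : Measure (Fin p → ℝ) :=
  Measure.pi fun _ => gaussianReal 0 1

/-- The perturbation map of the lower-bound construction:
`X_ℓ = ρ(N₁² − 1) + √(1−2ρ²) N_ℓ` for `ℓ ∈ A` and `X_ℓ = N_ℓ` otherwise. -/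
def perturb (p : ℕ) (hp : 0 < p) (A : Finset (Fin p)) (ρ : ℝ)
    (x : Fin p → ℝ) : Fin p → ℝ :=
  fun ℓ => if ℓ ∈ A then ρ * (x ⟨0, hp⟩ ^ 2 - 1) + Real.sqrt (1 - 2 * ρ ^ 2) * x ℓ
    else x ℓ

/-- The law of the perturbed Gaussian design. -/
def perturbedLaw (p : ℕ) (hp : 0 < p) (A : Finset (Fin p)) (ρ : ℝ) :
    Measure (Fin p → ℝ) :=
  Measure.map (perturb p hp A ρ) (stdGaussianPi p)

/-!
Write `Z = N₁² − 1`. Every coordinate of the design is `X_ℓ = ρ 1_A(ℓ) Z + d_ℓ N_ℓ`, where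
`d_ℓ = √(1 − 2ρ²)` on `A` and `1` off `A`, and `f(X) = (Φ/√3)(Z + 1)` because `1 ∉ A`.
The functions `Z, N_1, …, N_p, 1` are orthogonal in `L²(N(0, I_p))`, with `E Z² = 2`; this
only uses the Gaussian moments `E N² = 1`, `E N³ = 0`, `E N⁴ = 3`, which follow from the
integration by parts `E N^{n+2} = (n+1) E N^n`. Hence `M = E XXᵀ` is the identity off `A` and
the equicorrelation matrix `(1−2ρ²)I + 2ρ² 𝟙𝟙ᵀ` on `A`, while `E[X f(X)] = (2Φρ/√3) 1_A`.
Since `1_A` is an eigenvector of `M` for the eigenvalue `1 + 2(s−1)ρ²` and `M` is positive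
definite, `θ` solves the normal equations `Mθ = E[X f(X)]`, and the risk of the projection is
`E f² − θᵀ E[X f(X)] = Φ² − (Φ²/3)·4sρ²/(1 + 2(s−1)ρ²)`.
-/

open Real

local notation "γ" => gaussianReal 0 1

section GaussianMoments

lemma gaussianPDFReal_zero_one_eq :
    gaussianPDFReal 0 1 = fun x ↦ (√(2 * π))⁻¹ * rexp (x ^ 2 / -2) := by
  ext x; simp [gaussianPDFReal_def]; ring_nf; simp

lemma hasDerivAt_gaussianPDFReal_zero_one (x : ℝ) :
    HasDerivAt (gaussianPDFReal 0 1) (-x * gaussianPDFReal 0 1 x) x := by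
  rw [gaussianPDFReal_zero_one_eq]
  refine (((hasDerivAt_pow 2 x).div_const (-2)).exp.const_mul (√(2 * π))⁻¹).congr_deriv ?_
  push_cast; ring

lemma integrable_pow_gaussianReal (n : ℕ) : Integrable (fun t : ℝ ↦ t ^ n) γ :=
  (integrable_norm_iff (by fun_prop)).1 <| by
    simpa [abs_pow] using (memLp_id_gaussianReal (μ := 0) (v := 1) n).integrable_norm_pow'

lemma integrable_gaussianPDFReal_mul_pow (n : ℕ) :
    Integrable (fun t ↦ gaussianPDFReal 0 1 t * t ^ n) := by
  have h := integrable_pow_gaussianReal n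
  rw [gaussianReal_of_var_ne_zero 0 one_ne_zero,
    integrable_withDensity_iff_integrable_smul' (measurable_gaussianPDF 0 1)
      (ae_of_all _ fun _ ↦ gaussianPDF_lt_top)] at h
  simpa using h

lemma integral_pow_add_two_gaussianReal (n : ℕ) :
    ∫ t, t ^ (n + 2) ∂γ = (n + 1) * ∫ t, t ^ n ∂γ := by
  simp only [integral_gaussianReal_eq_integral_smul one_ne_zero, smul_eq_mul]
  have hibp := integral_mul_deriv_eq_deriv_mul_of_integrable (u := fun t : ℝ ↦ t ^ (n + 1))
    (u' := fun t ↦ (n + 1) * t ^ n) (fun x _ ↦ by simpa using hasDerivAt_pow (n + 1) x)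
    (fun x _ ↦ hasDerivAt_gaussianPDFReal_zero_one x) ?_ ?_ ?_
  · have hleft : ∫ t, t ^ (n + 1) * (-t * gaussianPDFReal 0 1 t)
        = -∫ t, gaussianPDFReal 0 1 t * t ^ (n + 2) := by
      rw [← integral_neg]; congr 1; ext t; ring
    have hright : ∫ t, (n + 1) * t ^ n * gaussianPDFReal 0 1 t
        = (n + 1) * ∫ t, gaussianPDFReal 0 1 t * t ^ n := by
      rw [← integral_const_mul]; congr 1; ext t; ring
    linarith
  · exact (integrable_gaussianPDFReal_mul_pow (n + 2)).neg.congr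
      (ae_of_all _ fun t ↦ by simp; ring)
  · exact ((integrable_gaussianPDFReal_mul_pow n).const_mul (n + 1)).congr
      (ae_of_all _ fun t ↦ by simp; ring)
  · exact (integrable_gaussianPDFReal_mul_pow (n + 1)).congr
      (ae_of_all _ fun t ↦ by simp; ring)

lemma integral_sq_gaussianReal : ∫ t, t ^ 2 ∂γ = 1 := by
  simpa using integral_pow_add_two_gaussianReal 0

lemma integral_pow_three_gaussianReal : ∫ t, t ^ 3 ∂γ = 0 := by
  simpa using integral_pow_add_two_gaussianReal 1

lemma integral_pow_four_gaussianReal : ∫ t, t ^ 4 ∂γ = 3 := by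
  rw [integral_pow_add_two_gaussianReal 2, integral_sq_gaussianReal]; norm_num

lemma memLp_pow_gaussianReal (n : ℕ) : MemLp (fun t : ℝ ↦ t ^ n) 2 γ :=
  (memLp_two_iff_integrable_sq (by fun_prop)).2 <| by
    simpa only [← pow_mul] using integrable_pow_gaussianReal (n * 2)

lemma integral_sq_sub_one_gaussianReal : ∫ t, (t ^ 2 - 1) ∂γ = 0 := by
  rw [integral_sub (integrable_pow_gaussianReal 2) (integrable_const 1), integral_sq_gaussianReal]
  simp

lemma integral_sq_sub_one_mul_gaussianReal : ∫ t, (t ^ 2 - 1) * t ∂γ = 0 := by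
  have h1 : Integrable (fun t : ℝ ↦ t) γ := by simpa using integrable_pow_gaussianReal 1
  simp_rw [sub_mul, one_mul, ← pow_succ]
  rw [integral_sub (integrable_pow_gaussianReal 3) h1, integral_pow_three_gaussianReal,
    integral_id_gaussianReal, sub_zero]

lemma integral_sq_sub_one_mul_self_gaussianReal :
    ∫ t, (t ^ 2 - 1) * (t ^ 2 - 1) ∂γ = 2 := by
  have h : ∀ t : ℝ, (t ^ 2 - 1) * (t ^ 2 - 1) = t ^ 4 - 2 * t ^ 2 + 1 := fun t ↦ by ring
  simp_rw [h]
  have h4 := integrable_pow_gaussianReal 4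
  have h2 := (integrable_pow_gaussianReal 2).const_mul 2
  rw [integral_add (f := fun t ↦ t ^ 4 - 2 * t ^ 2) (h4.sub h2) (integrable_const 1),
    integral_sub h4 h2, integral_const_mul, integral_pow_four_gaussianReal,
    integral_sq_gaussianReal]
  norm_num

end GaussianMoments

lemma integral_add_mul_add {Ω : Type*} {mΩ : MeasurableSpace Ω} {μ : Measure Ω}
    {u v w y : Ω → ℝ} (hu : MemLp u 2 μ) (hv : MemLp v 2 μ) (hw : MemLp w 2 μ)
    (hy : MemLp y 2 μ) (a b c d : ℝ) :
    ∫ ω, (a * u ω + b * v ω) * (c * w ω + d * y ω) ∂μ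
      = a * c * ∫ ω, u ω * w ω ∂μ + a * d * ∫ ω, u ω * y ω ∂μ
        + b * c * ∫ ω, v ω * w ω ∂μ + b * d * ∫ ω, v ω * y ω ∂μ := by
  have huw := (hu.integrable_mul hw).const_mul (a * c)
  have huy := (hu.integrable_mul hy).const_mul (a * d)
  have hvw := (hv.integrable_mul hw).const_mul (b * c)
  have hvy := (hv.integrable_mul hy).const_mul (b * d)
  simp only [Pi.mul_apply] at huw huy hvw hvy
  have h : ∀ ω, (a * u ω + b * v ω) * (c * w ω + d * y ω)
      = a * c * (u ω * w ω) + a * d * (u ω * y ω) + b * c * (v ω * w ω)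
        + b * d * (v ω * y ω) := fun ω ↦ by ring
  simp_rw [h]
  rw [integral_add ?_ hvy, integral_add ?_ hvw, integral_add huw huy]
  · simp only [integral_const_mul]
  · exact huw.add huy
  · exact (huw.add huy).add hvw

section StdGaussianPi

variable {p : ℕ}

instance : IsProbabilityMeasure (stdGaussianPi p) := by
  unfold stdGaussianPi; infer_instance

lemma memLp_comp_eval_stdGaussianPi {g : ℝ → ℝ} (hg : MemLp g 2 γ) (i : Fin p) :
    MemLp (fun x ↦ g (x i)) 2 (stdGaussianPi p) :=
  hg.comp_measurePreserving (measurePreserving_eval _ i)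

lemma integral_comp_eval_stdGaussianPi {g : ℝ → ℝ} (hg : Measurable g) (i : Fin p) :
    ∫ x, g (x i) ∂stdGaussianPi p = ∫ t, g t ∂γ :=
  integral_comp_eval hg.aestronglyMeasurable

lemma integral_comp_eval_mul_comp_eval_stdGaussianPi {g h : ℝ → ℝ} (hg : Measurable g)
    (hh : Measurable h) {i j : Fin p} (hij : i ≠ j) :
    ∫ x, g (x i) * h (x j) ∂stdGaussianPi p = (∫ t, g t ∂γ) * ∫ t, h t ∂γ := by
  have hind := (iIndepFun_pi (μ := fun _ : Fin p ↦ γ) (X := fun _ ↦ id)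
    (fun _ ↦ aemeasurable_id)).indepFun hij
  have h := hind.integral_fun_comp_mul_comp
    (measurable_pi_apply i).aemeasurable (measurable_pi_apply j).aemeasurable
    hg.aestronglyMeasurable hh.aestronglyMeasurable
  simp only [id] at h
  rw [stdGaussianPi, h, integral_comp_eval hg.aestronglyMeasurable,
    integral_comp_eval hh.aestronglyMeasurable]

variable (i : Fin p)

lemma memLp_eval_stdGaussianPi : MemLp (fun x : Fin p → ℝ ↦ x i) 2 (stdGaussianPi p) :=
  memLp_comp_eval_stdGaussianPi (memLp_id_gaussianReal 2) i

lemma memLp_sq_sub_one_stdGaussianPi :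
    MemLp (fun x : Fin p → ℝ ↦ x i ^ 2 - 1) 2 (stdGaussianPi p) :=
  memLp_comp_eval_stdGaussianPi ((memLp_pow_gaussianReal 2).sub (memLp_const 1)) i

lemma integral_eval_stdGaussianPi : ∫ x, x i ∂stdGaussianPi p = 0 := by
  simpa using integral_comp_eval_stdGaussianPi measurable_id i

lemma integral_eval_mul_eval_stdGaussianPi (j : Fin p) :
    ∫ x, x i * x j ∂stdGaussianPi p = if i = j then 1 else 0 := by
  rcases eq_or_ne i j with rfl | hij
  · rw [if_pos rfl, ← integral_sq_gaussianReal,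
      ← integral_comp_eval_stdGaussianPi (g := fun t ↦ t ^ 2) (by fun_prop) i]
    simp only [sq]
  · simpa [hij] using integral_comp_eval_mul_comp_eval_stdGaussianPi (g := id) (h := id)
      measurable_id measurable_id hij

lemma integral_sq_sub_one_stdGaussianPi : ∫ x, (x i ^ 2 - 1) ∂stdGaussianPi p = 0 := by
  rw [integral_comp_eval_stdGaussianPi (g := fun t ↦ t ^ 2 - 1) (by fun_prop),
    integral_sq_sub_one_gaussianReal]

lemma integral_sq_sub_one_mul_self_stdGaussianPi :
    ∫ x, (x i ^ 2 - 1) * (x i ^ 2 - 1) ∂stdGaussianPi p = 2 := by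
  rw [integral_comp_eval_stdGaussianPi (g := fun t ↦ (t ^ 2 - 1) * (t ^ 2 - 1)) (by fun_prop),
    integral_sq_sub_one_mul_self_gaussianReal]

lemma integral_sq_sub_one_mul_eval_stdGaussianPi (j : Fin p) :
    ∫ x, (x i ^ 2 - 1) * x j ∂stdGaussianPi p = 0 := by
  rcases eq_or_ne i j with rfl | hij
  · rw [integral_comp_eval_stdGaussianPi (g := fun t ↦ (t ^ 2 - 1) * t) (by fun_prop),
      integral_sq_sub_one_mul_gaussianReal]
  · simpa [integral_sq_sub_one_gaussianReal] using
      integral_comp_eval_mul_comp_eval_stdGaussianPi (g := fun t ↦ t ^ 2 - 1) (h := id)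
        (by fun_prop) measurable_id hij

lemma integral_eval_mul_sq_sub_one_stdGaussianPi (j : Fin p) :
    ∫ x, x j * (x i ^ 2 - 1) ∂stdGaussianPi p = 0 := by
  simpa only [mul_comm] using integral_sq_sub_one_mul_eval_stdGaussianPi i j

end StdGaussianPi

def quadDesign {p : ℕ} (i : Fin p) (a d : Fin p → ℝ) (x : Fin p → ℝ) : Fin p → ℝ :=
  fun ℓ ↦ a ℓ * (x i ^ 2 - 1) + d ℓ * x ℓ

section quadDesign

variable {p : ℕ} (i : Fin p) (a d : Fin p → ℝ)

lemma measurable_quadDesign : Measurable (quadDesign i a d) :=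
  measurable_pi_lambda _ fun ℓ ↦ by unfold quadDesign; fun_prop

lemma memLp_quadDesign (ℓ : Fin p) :
    MemLp (fun x ↦ quadDesign i a d x ℓ) 2 (stdGaussianPi p) :=
  ((memLp_sq_sub_one_stdGaussianPi i).const_mul (a ℓ)).add
    ((memLp_eval_stdGaussianPi ℓ).const_mul (d ℓ))

lemma integral_quadDesign_mul_quadDesign (ℓ m : Fin p) :
    ∫ x, quadDesign i a d x ℓ * quadDesign i a d x m ∂stdGaussianPi p
      = 2 * a ℓ * a m + if ℓ = m then d ℓ ^ 2 else 0 := by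
  simp only [quadDesign]
  rw [integral_add_mul_add (memLp_sq_sub_one_stdGaussianPi i) (memLp_eval_stdGaussianPi ℓ)
    (memLp_sq_sub_one_stdGaussianPi i) (memLp_eval_stdGaussianPi m),
    integral_sq_sub_one_mul_self_stdGaussianPi, integral_sq_sub_one_mul_eval_stdGaussianPi,
    integral_eval_mul_sq_sub_one_stdGaussianPi, integral_eval_mul_eval_stdGaussianPi]
  split_ifs with h
  · subst h; ring
  · ring

lemma integral_quadDesign_mul_sq (ℓ : Fin p) :
    ∫ x, quadDesign i a d x ℓ * x i ^ 2 ∂stdGaussianPi p = 2 * a ℓ := by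
  have h : ∀ x : Fin p → ℝ, quadDesign i a d x ℓ * x i ^ 2
      = (a ℓ * (x i ^ 2 - 1) + d ℓ * x ℓ) * (1 * (x i ^ 2 - 1) + 1 * 1) := fun x ↦ by
    simp only [quadDesign]; ring
  simp_rw [h]
  rw [integral_add_mul_add (memLp_sq_sub_one_stdGaussianPi i) (memLp_eval_stdGaussianPi ℓ)
    (memLp_sq_sub_one_stdGaussianPi i) (memLp_const 1)]
  simp only [mul_one, integral_sq_sub_one_mul_self_stdGaussianPi,
    integral_sq_sub_one_stdGaussianPi, integral_eval_mul_sq_sub_one_stdGaussianPi,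
    integral_eval_stdGaussianPi]
  ring

end quadDesign

section Equicorrelation

variable {ι : Type*} [DecidableEq ι] (A : Finset ι)

def indicatorVec (ℓ : ι) : ℝ := if ℓ ∈ A then 1 else 0

lemma indicatorVec_mul_self (ℓ : ι) :
    indicatorVec A ℓ * indicatorVec A ℓ = indicatorVec A ℓ := by
  unfold indicatorVec; split_ifs <;> norm_num

variable [Fintype ι]

lemma indicatorVec_dotProduct_self : indicatorVec A ⬝ᵥ indicatorVec A = A.card := by
  simp [dotProduct, indicatorVec]

/-- The identity off `A`, and the equicorrelation matrix `(1 - t) I + t 𝟙𝟙ᵀ` on the block `A`. -/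
def equicorrelation (t : ℝ) : Matrix ι ι ℝ :=
  diagonal (fun ℓ ↦ 1 - t * indicatorVec A ℓ) + t • vecMulVec (indicatorVec A) (indicatorVec A)

lemma equicorrelation_mulVec_indicatorVec (t : ℝ) :
    equicorrelation A t *ᵥ indicatorVec A = (1 + (A.card - 1) * t) • indicatorVec A := by
  ext ℓ
  simp only [equicorrelation, add_mulVec, smul_mulVec, vecMulVec_mulVec, mulVec_diagonal,
    indicatorVec_dotProduct_self, Pi.add_apply, Pi.smul_apply, op_smul_eq_mul, smul_eq_mul]
  linear_combination (-t) * indicatorVec_mul_self A ℓ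

lemma posDef_equicorrelation {t : ℝ} (ht0 : 0 ≤ t) (ht1 : t < 1) :
    (equicorrelation A t).PosDef := by
  refine PosDef.add_posSemidef (posDef_diagonal_iff.2 fun ℓ ↦ ?_)
    ((posSemidef_vecMulVec_self_star _).smul ht0)
  unfold indicatorVec; split_ifs <;> linarith

end Equicorrelation

lemma l0_smul_indicatorVec {p : ℕ} (A : Finset (Fin p)) {c : ℝ} (hc : c ≠ 0) :
    l0 (c • indicatorVec A) = A.card := by
  unfold l0
  congr 1
  ext ℓ
  simp [indicatorVec, hc]

section SecondMoments

variable {p : ℕ} (μ : Measure (Fin p → ℝ))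

def secondMoment : Matrix (Fin p) (Fin p) ℝ := of fun ℓ m ↦ ∫ x, x ℓ * x m ∂μ

def crossMoment (g : (Fin p → ℝ) → ℝ) : Fin p → ℝ := fun ℓ ↦ ∫ x, x ℓ * g x ∂μ

lemma integral_sub_dot_sq {g : (Fin p → ℝ) → ℝ} (hX : ∀ ℓ, MemLp (fun x ↦ x ℓ) 2 μ)
    (hg : MemLp g 2 μ) (θ : Fin p → ℝ) :
    ∫ x, (g x - dot x θ) ^ 2 ∂μ
      = ∫ x, g x ^ 2 ∂μ - 2 * θ ⬝ᵥ crossMoment μ g + θ ⬝ᵥ (secondMoment μ *ᵥ θ) := by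
  have hXX : ∀ ℓ m, Integrable (fun x ↦ θ ℓ * (x ℓ * x m * θ m)) μ := fun ℓ m ↦
    (((hX ℓ).integrable_mul (hX m)).mul_const (θ m)).const_mul (θ ℓ)
  have hXg : ∀ ℓ, Integrable (fun x ↦ θ ℓ * (x ℓ * g x)) μ := fun ℓ ↦
    ((hX ℓ).integrable_mul hg).const_mul (θ ℓ)
  have hXg' : Integrable (fun x ↦ ∑ ℓ, θ ℓ * (x ℓ * g x)) μ :=
    integrable_finsetSum _ fun ℓ _ ↦ hXg ℓ
  have hXX' : Integrable (fun x ↦ ∑ ℓ, ∑ m, θ ℓ * (x ℓ * x m * θ m)) μ :=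
    integrable_finsetSum _ fun ℓ _ ↦ integrable_finsetSum _ fun m _ ↦ hXX ℓ m
  have h : ∀ x, (g x - dot x θ) ^ 2 = g x ^ 2 - 2 * ∑ ℓ, θ ℓ * (x ℓ * g x)
      + ∑ ℓ, ∑ m, θ ℓ * (x ℓ * x m * θ m) := fun x ↦ by
    have hlin : ∑ ℓ, θ ℓ * (x ℓ * g x) = dot x θ * g x := by
      rw [dot, Finset.sum_mul]; exact Finset.sum_congr rfl fun ℓ _ ↦ by ring
    have hquad : ∑ ℓ, ∑ m, θ ℓ * (x ℓ * x m * θ m) = dot x θ ^ 2 := by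
      rw [dot, sq, Finset.sum_mul_sum]
      exact Finset.sum_congr rfl fun ℓ _ ↦ Finset.sum_congr rfl fun m _ ↦ by ring
    rw [hlin, hquad]; ring
  simp_rw [h]
  rw [integral_add ?_ hXX', integral_sub hg.integrable_sq (hXg'.const_mul 2), integral_const_mul,
    integral_finsetSum _ fun ℓ _ ↦ hXg ℓ,
    integral_finsetSum _ fun ℓ _ ↦ integrable_finsetSum _ fun m _ ↦ hXX ℓ m]
  · simp only [integral_finsetSum _ fun m _ ↦ hXX _ m, integral_const_mul, integral_mul_const,
      dotProduct, mulVec, secondMoment, crossMoment, of_apply, Finset.mul_sum]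
  · exact hg.integrable_sq.sub (hXg'.const_mul 2)

lemma integral_sub_dot_sq_of_mulVec_eq {g : (Fin p → ℝ) → ℝ}
    (hX : ∀ ℓ, MemLp (fun x ↦ x ℓ) 2 μ) (hg : MemLp g 2 μ) {θ : Fin p → ℝ}
    (hθ : secondMoment μ *ᵥ θ = crossMoment μ g) :
    ∫ x, (g x - dot x θ) ^ 2 ∂μ = ∫ x, g x ^ 2 ∂μ - θ ⬝ᵥ crossMoment μ g := by
  rw [integral_sub_dot_sq μ hX hg, hθ]; ring

end SecondMoments

lemma one_add_two_mul_sub_one_mul_sq_pos (n : ℕ) {ρ : ℝ} (hρ : 2 * ρ ^ 2 < 1) :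
    0 < 1 + 2 * ((n : ℝ) - 1) * ρ ^ 2 := by
  nlinarith [(n.cast_nonneg : (0 : ℝ) ≤ n)]

section perturbedLaw

variable {p : ℕ} (hp : 0 < p) (A : Finset (Fin p)) (ρ : ℝ)

lemma perturb_eq_quadDesign :
    perturb p hp A ρ = quadDesign ⟨0, hp⟩ (ρ • indicatorVec A)
      (fun ℓ ↦ if ℓ ∈ A then √(1 - 2 * ρ ^ 2) else 1) := by
  ext x ℓ
  simp only [perturb, quadDesign, indicatorVec, Pi.smul_apply, smul_eq_mul]
  split_ifs <;> ring

lemma perturb_apply_of_notMem {ℓ : Fin p} (hℓ : ℓ ∉ A) (x : Fin p → ℝ) :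
    perturb p hp A ρ x ℓ = x ℓ :=
  if_neg hℓ

lemma measurable_perturb : Measurable (perturb p hp A ρ) := by
  rw [perturb_eq_quadDesign]; exact measurable_quadDesign _ _ _

lemma integral_perturbedLaw {g : (Fin p → ℝ) → ℝ} (hg : Measurable g) :
    ∫ x, g x ∂perturbedLaw p hp A ρ = ∫ x, g (perturb p hp A ρ x) ∂stdGaussianPi p :=
  integral_map (measurable_perturb hp A ρ).aemeasurable hg.aestronglyMeasurable

lemma memLp_perturbedLaw {g : (Fin p → ℝ) → ℝ} (hg : Measurable g)
    (h : MemLp (fun x ↦ g (perturb p hp A ρ x)) 2 (stdGaussianPi p)) :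
    MemLp g 2 (perturbedLaw p hp A ρ) :=
  (memLp_map_measure_iff hg.aestronglyMeasurable (measurable_perturb hp A ρ).aemeasurable).2 h

lemma memLp_eval_perturbedLaw (ℓ : Fin p) : MemLp (fun x ↦ x ℓ) 2 (perturbedLaw p hp A ρ) :=
  memLp_perturbedLaw hp A ρ (by fun_prop) <| by
    rw [perturb_eq_quadDesign]; exact memLp_quadDesign _ _ _ ℓ

lemma secondMoment_perturbedLaw (hρ : 2 * ρ ^ 2 ≤ 1) :
    secondMoment (perturbedLaw p hp A ρ) = equicorrelation A (2 * ρ ^ 2) := by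
  ext ℓ m
  rw [secondMoment, of_apply, integral_perturbedLaw hp A ρ (by fun_prop), perturb_eq_quadDesign,
    integral_quadDesign_mul_quadDesign]
  simp only [equicorrelation, Matrix.add_apply, diagonal_apply, Matrix.smul_apply,
    vecMulVec_apply, Pi.smul_apply, smul_eq_mul, indicatorVec]
  split_ifs <;> simp_all [Real.sq_sqrt (sub_nonneg.2 hρ)] <;> ring

lemma posDef_secondMoment_perturbedLaw (hρ : 2 * ρ ^ 2 < 1) :
    (secondMoment (perturbedLaw p hp A ρ)).PosDef := by
  rw [secondMoment_perturbedLaw hp A ρ hρ.le]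
  exact posDef_equicorrelation A (by positivity) hρ

variable {hp A} (hA0 : (⟨0, hp⟩ : Fin p) ∉ A)
include hA0

lemma memLp_sq_perturbedLaw : MemLp (fun x ↦ x ⟨0, hp⟩ ^ 2) 2 (perturbedLaw p hp A ρ) :=
  memLp_perturbedLaw hp A ρ (by fun_prop) <| by
    simp_rw [perturb_apply_of_notMem hp A ρ hA0]
    exact memLp_comp_eval_stdGaussianPi (memLp_pow_gaussianReal 2) _

lemma integral_mul_sq_sq_perturbedLaw (k : ℝ) :
    ∫ x, (k * x ⟨0, hp⟩ ^ 2) ^ 2 ∂perturbedLaw p hp A ρ = 3 * k ^ 2 := by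
  have h : ∀ x : Fin p → ℝ, (k * x ⟨0, hp⟩ ^ 2) ^ 2 = k ^ 2 * x ⟨0, hp⟩ ^ 4 := fun x ↦ by ring
  simp_rw [h]
  rw [integral_const_mul, integral_perturbedLaw hp A ρ (by fun_prop)]
  simp_rw [perturb_apply_of_notMem hp A ρ hA0]
  rw [integral_comp_eval_stdGaussianPi (g := fun t ↦ t ^ 4) (by fun_prop),
    integral_pow_four_gaussianReal, mul_comm]

lemma crossMoment_perturbedLaw (k : ℝ) :
    crossMoment (perturbedLaw p hp A ρ) (fun x ↦ k * x ⟨0, hp⟩ ^ 2)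
      = (2 * k * ρ) • indicatorVec A := by
  ext ℓ
  rw [crossMoment]
  simp_rw [mul_left_comm _ k, integral_const_mul]
  rw [integral_perturbedLaw hp A ρ (by fun_prop)]
  simp_rw [perturb_apply_of_notMem hp A ρ hA0]
  rw [perturb_eq_quadDesign, integral_quadDesign_mul_sq, Pi.smul_apply, Pi.smul_apply,
    smul_eq_mul, smul_eq_mul]
  ring

lemma secondMoment_mulVec_eq_crossMoment_perturbedLaw (hρ : 2 * ρ ^ 2 < 1) (k : ℝ) :
    secondMoment (perturbedLaw p hp A ρ) *ᵥ
        ((2 * k * ρ / (1 + 2 * (A.card - 1) * ρ ^ 2)) • indicatorVec A)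
      = crossMoment (perturbedLaw p hp A ρ) (fun x ↦ k * x ⟨0, hp⟩ ^ 2) := by
  have hD := one_add_two_mul_sub_one_mul_sq_pos A.card hρ
  rw [secondMoment_perturbedLaw hp A ρ hρ.le, crossMoment_perturbedLaw ρ hA0, mulVec_smul,
    equicorrelation_mulVec_indicatorVec, smul_smul]
  congr 1
  rw [show 1 + ((A.card : ℝ) - 1) * (2 * ρ ^ 2) = 1 + 2 * (A.card - 1) * ρ ^ 2 by ring]
  exact div_mul_cancel₀ _ hD.ne'

lemma integral_sub_dot_sq_perturbedLaw (hρ : 2 * ρ ^ 2 < 1) (k : ℝ) :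
    ∫ x, (k * x ⟨0, hp⟩ ^ 2
        - dot x ((2 * k * ρ / (1 + 2 * (A.card - 1) * ρ ^ 2)) • indicatorVec A)) ^ 2
      ∂perturbedLaw p hp A ρ
      = k ^ 2 * (3 - 4 * A.card * ρ ^ 2 / (1 + 2 * (A.card - 1) * ρ ^ 2)) := by
  have hD := one_add_two_mul_sub_one_mul_sq_pos A.card hρ
  rw [integral_sub_dot_sq_of_mulVec_eq _ (memLp_eval_perturbedLaw hp A ρ)
      ((memLp_sq_perturbedLaw ρ hA0).const_mul k)
      (secondMoment_mulVec_eq_crossMoment_perturbedLaw ρ hA0 hρ k),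
    integral_mul_sq_sq_perturbedLaw ρ hA0, crossMoment_perturbedLaw ρ hA0, smul_dotProduct,
    dotProduct_smul, indicatorVec_dotProduct_self, smul_eq_mul, smul_eq_mul]
  field_simp
  ring

end perturbedLaw

theorem lower_bound_projection_coefficient_general
    (p s : ℕ) (hp : 0 < p)
    (A : Finset (Fin p)) (hA0 : (⟨0, hp⟩ : Fin p) ∉ A) (hcard : A.card = s)
    (ρ : ℝ) (hρ0 : 0 < ρ) (hρ : ρ ^ 2 < 1 / 2)
    (Φ : ℝ) (hΦ : 0 < Φ)
    -- `f(X) = (Φ/√3) X₁²`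
    (f : (Fin p → ℝ) → ℝ) (hf : ∀ x, f x = Φ / Real.sqrt 3 * x ⟨0, hp⟩ ^ 2)
    (M : Matrix (Fin p) (Fin p) ℝ)
    (hM : M = Matrix.of fun ℓ m => ∫ x, x ℓ * x m ∂(perturbedLaw p hp A ρ))
    (θ : Fin p → ℝ)
    (hθ : θ = fun ℓ => if ℓ ∈ A then
      2 * Φ * ρ / (Real.sqrt 3 * (1 + 2 * ((s : ℝ) - 1) * ρ ^ 2)) else 0) :
    -- the projection coefficient `M⁻¹E[Xf(X)]` equals
    -- `(2Φρ/(√3(1+2(s−1)ρ²))) 1_A`, which is `s`-sparse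
    M⁻¹.mulVec (fun ℓ => ∫ x, x ℓ * f x ∂(perturbedLaw p hp A ρ)) = θ ∧
    l0 θ = s ∧
    -- the misspecification: `E(f(X) − Xᵀθ)² = (Φ²/3)(3 − 4sρ²/(1+2(s−1)ρ²)) ≤ Φ²`
    (∫ x, (f x - dot x θ) ^ 2 ∂(perturbedLaw p hp A ρ) =
      Φ ^ 2 / 3 * (3 - 4 * (s : ℝ) * ρ ^ 2 / (1 + 2 * ((s : ℝ) - 1) * ρ ^ 2))) ∧
    (∫ x, (f x - dot x θ) ^ 2 ∂(perturbedLaw p hp A ρ) ≤ Φ ^ 2) := by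
  obtain ⟨k, hk⟩ : ∃ k, Φ / √3 = k := ⟨_, rfl⟩
  have hk0 : 0 < k := hk ▸ by positivity
  have hΦk : Φ ^ 2 / 3 = k ^ 2 := by
    rw [← hk, div_pow, Real.sq_sqrt (by norm_num : (0 : ℝ) ≤ 3)]
  obtain rfl : f = fun x ↦ k * x ⟨0, hp⟩ ^ 2 := funext fun x ↦ by rw [hf, hk]
  have hρ' : 2 * ρ ^ 2 < 1 := by linarith
  set D := 1 + 2 * ((s : ℝ) - 1) * ρ ^ 2
  have hD : 0 < D := one_add_two_mul_sub_one_mul_sq_pos s hρ'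
  have hθe : θ = (2 * k * ρ / D) • indicatorVec A := by
    ext ℓ
    simp only [hθ, indicatorVec, Pi.smul_apply, smul_eq_mul, mul_ite, mul_one, mul_zero]
    congr 1; rw [← hk]; field_simp
  replace hM : M = secondMoment (perturbedLaw p hp A ρ) := hM
  have hnormal := secondMoment_mulVec_eq_crossMoment_perturbedLaw ρ hA0 hρ' k
  rw [hcard, ← hθe, ← hM] at hnormal
  have : Invertible M :=
    (hM ▸ posDef_secondMoment_perturbedLaw hp A ρ hρ').isUnit.invertible
  have hrisk := integral_sub_dot_sq_perturbedLaw ρ hA0 hρ' k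
  rw [hcard, ← hθe, ← hΦk] at hrisk
  refine ⟨inv_mulVec_eq_vec hnormal.symm, ?_, hrisk, ?_⟩
  · rw [hθe, l0_smul_indicatorVec A (by positivity), hcard]
  · rw [hrisk]
    have : 0 ≤ 4 * s * ρ ^ 2 / D := by positivity
    nlinarith

/-- **The sparse projection coefficient in the lower-bound construction of Theorem 1.** -/
theorem lower_bound_projection_coefficient
    (p s : ℕ) (hp : 0 < p) (hs : 2 ≤ s)
    (A : Finset (Fin p)) (hA0 : (⟨0, hp⟩ : Fin p) ∉ A) (hcard : A.card = s)
    (ρ : ℝ) (hρ0 : 0 < ρ) (hρ : ρ ^ 2 < 1 / 2)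
    (Φ : ℝ) (hΦ : 0 < Φ)
    -- `f(X) = (Φ/√3) X₁²`
    (f : (Fin p → ℝ) → ℝ) (hf : ∀ x, f x = Φ / Real.sqrt 3 * x ⟨0, hp⟩ ^ 2)
    (M : Matrix (Fin p) (Fin p) ℝ)
    (hM : M = Matrix.of fun ℓ m => ∫ x, x ℓ * x m ∂(perturbedLaw p hp A ρ))
    (θ : Fin p → ℝ)
    (hθ : θ = fun ℓ => if ℓ ∈ A then
      2 * Φ * ρ / (Real.sqrt 3 * (1 + 2 * ((s : ℝ) - 1) * ρ ^ 2)) else 0) :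
    -- the projection coefficient `M⁻¹E[Xf(X)]` equals
    -- `(2Φρ/(√3(1+2(s−1)ρ²))) 1_A`, which is `s`-sparse
    M⁻¹.mulVec (fun ℓ => ∫ x, x ℓ * f x ∂(perturbedLaw p hp A ρ)) = θ ∧
    l0 θ = s ∧
    -- the misspecification: `E(f(X) − Xᵀθ)² = (Φ²/3)(3 − 4sρ²/(1+2(s−1)ρ²)) ≤ Φ²`
    (∫ x, (f x - dot x θ) ^ 2 ∂(perturbedLaw p hp A ρ) =
      Φ ^ 2 / 3 * (3 - 4 * (s : ℝ) * ρ ^ 2 / (1 + 2 * ((s : ℝ) - 1) * ρ ^ 2))) ∧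
    (∫ x, (f x - dot x θ) ^ 2 ∂(perturbedLaw p hp A ρ) ≤ Φ ^ 2) :=
  lower_bound_projection_coefficient_general p s hp A hA0 hcard ρ hρ0 hρ Φ hΦ f hf M hM θ hθ

end SSL
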